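/- arXiv:0711.2334 — 5 statements merged into one kernel-verified Lean document; each statement's English description precedes it below -/
import Mathlib

section
/- For any convex TU game v on N, any player i ∈ N, and any coalition A with i ∈ A ⊆ N, the Shapley value of i in the sub-game v_A is at most the Shapley value of i in v. In other words, the Shapley value encourages the grand coalition in convex games. -/
/-- The set of predecessors of `i` in the order given by the permutation `π`. -/
def predecessors {α : Type*} [Fintype α] [LinearOrder α]
    (π : Equiv.Perm α) (i : α) : Finset α :=
  Finset.univ.filter (fun j => π.symm j < π.symm i)

/-- The Shapley value of player `i` in the game `v`: the average over all permutations
of the marginal contribution of `i` to its set of predecessors. -/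
noncomputable def shapley {α : Type*} [Fintype α] [LinearOrder α]
    (v : Finset α → ℝ) (i : α) : ℝ :=
  ((Fintype.card α).factorial : ℝ)⁻¹ *
    ∑ π : Equiv.Perm α, (v (insert i (predecessors π i)) - v (predecessors π i))

/-!
The Shapley value of `i` in `v_A` has the subset form
`∑_{T ⊆ A \ {i}} w(|A|, |T|) (v (T ∪ {i}) - v T)` with `w(a, t) = t! (a - 1 - t)! / a!`: an
ordering gives `i` the predecessor set `S` iff its position map sends `S` below position `|S|`,
`i` to it and the rest above, and there are `|S|! (n - 1 - |S|)!` such maps.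
It then suffices to add one player `j ∉ A` at a time. Splitting the subsets of `(A ∪ {j}) \ {i}`
into `T` and `T ∪ {j}`, the weights satisfy `w(a + 1, t) + w(a + 1, t + 1) = w(a, t)`, and
convexity makes the marginal contribution of `i` to `T ∪ {j}` at least that to `T`.
-/

open Finset Nat

lemma card_filter_equiv_comp_eq {α β ι : Type*} [Fintype α] [DecidableEq α] [Fintype β]
    [DecidableEq β] [Fintype ι] [DecidableEq ι] (f : β → ι) (g : α → ι)
    (hfg : ∀ k, Fintype.card {b // f b = k} = Fintype.card {a // g a = k}) :
    #{σ : α ≃ β | f ∘ σ = g} = ∏ k, (Fintype.card {a // g a = k})! := by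
  let e k : {a // g a = k} ≃ {b // f b = k} := Fintype.equivOfCardEq (hfg k).symm
  let σ₀ : α ≃ β := Equiv.ofFiberEquiv e
  have hσ₀ (b : β) : g (σ₀.symm b) = f b := by
    have h := Equiv.ofFiberEquiv_map e (σ₀.symm b)
    rwa [Equiv.apply_symm_apply, eq_comm] at h
  rw [← DomMulAct.stabilizer_card g, ← Fintype.card_subtype]
  refine Fintype.card_congr
    (Equiv.subtypeEquiv (Equiv.equivCongr (.refl α) σ₀.symm) fun σ => ?_)
  have : g ∘ Equiv.equivCongr (.refl α) σ₀.symm σ = f ∘ σ := funext fun a => hσ₀ (σ a)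
  rw [this]

lemma card_filter_apply_lt_apply {α : Type*} [Fintype α] {m : ℕ} (σ : α ≃ Fin m) (i : α) :
    #{j | σ j < σ i} = σ i := by
  have : ({j | σ j < σ i} : Finset α) = (Iio (σ i)).map σ.symm.toEmbedding := by
    ext j; simp
  rw [this, card_map, Fin.card_Iio]

lemma card_compare_fibers {m : ℕ} (c : Fin m) :
    Fintype.card {p // compare p c = .lt} = c ∧
    Fintype.card {p // compare p c = .eq} = 1 ∧
    Fintype.card {p // compare p c = .gt} = m - 1 - c := by
  simp only [Fintype.card_subtype, compare_lt_iff_lt, compare_eq_iff_eq, compare_gt_iff_gt]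
  refine ⟨?_, ?_, ?_⟩
  · rw [← Fin.card_Iio]; congr 1; ext; simp
  · rw [card_eq_one]; exact ⟨c, by ext; simp⟩
  · rw [← Fin.card_Ioi]; congr 1; ext; simp

section ComparePattern

variable {α : Type*} [Fintype α] [DecidableEq α]

/-- How the players compare with `i` in an ordering whose set of predecessors of `i` is `S`. -/
def comparePattern (i : α) (S : Finset α) (j : α) : Ordering :=
  if j = i then .eq else if j ∈ S then .lt else .gt

lemma filter_apply_lt_apply_eq_iff {m : ℕ} (σ : α ≃ Fin m) {i : α} {S : Finset α}
    (hiS : i ∉ S) (hS : #S < m) :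
    ({j | σ j < σ i} : Finset α) = S ↔
      (compare · (⟨#S, hS⟩ : Fin m)) ∘ σ = comparePattern i S := by
  constructor
  · intro h
    have hσi : σ i = ⟨#S, hS⟩ :=
      Fin.ext ((card_filter_apply_lt_apply σ i).symm.trans (congrArg card h))
    funext j
    by_cases hji : j = i
    · simp [comparePattern, hji, hσi]
    have hjS : j ∈ S ↔ σ j < σ i := by rw [← h]; simp
    rcases lt_or_gt_of_ne (σ.injective.ne hji) with hlt | hgt
    · simp [comparePattern, hji, hjS.2 hlt, ← hσi, hlt, compare_lt_iff_lt]
    · simp [comparePattern, hji, mt hjS.1 (not_lt_of_gt hgt), ← hσi, hgt, compare_gt_iff_gt]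
  · intro h
    have hσi : σ i = ⟨#S, hS⟩ := by simpa [comparePattern] using congrFun h i
    ext j
    have hj := congrFun h j
    by_cases hji : j = i
    · subst hji; simp [hiS]
    by_cases hjS : j ∈ S
    · simp_all [comparePattern, compare_lt_iff_lt]
    · simp_all [comparePattern, compare_gt_iff_gt]
      exact hj.le

lemma card_comparePattern_fibers {i : α} {S : Finset α} (hiS : i ∉ S) :
    Fintype.card {j // comparePattern i S j = .lt} = #S ∧
    Fintype.card {j // comparePattern i S j = .eq} = 1 ∧
    Fintype.card {j // comparePattern i S j = .gt} = Fintype.card α - 1 - #S := by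
  simp only [Fintype.card_subtype]
  refine ⟨congrArg card ?_, ?_, ?_⟩
  · ext j; by_cases hji : j = i <;> simp [comparePattern, hji, hiS]
  · rw [card_eq_one]; exact ⟨i, by ext j; by_cases hji : j = i <;> simp [comparePattern, hji]⟩
  · rw [Nat.sub_sub, add_comm, ← card_insert_of_notMem hiS, ← card_compl]
    congr 1; ext j; by_cases hji : j = i <;> simp [comparePattern, hji]

lemma card_filter_compare_comp_eq_comparePattern {i : α} {S : Finset α} (hiS : i ∉ S)
    (hS : #S < Fintype.card α) :
    #{σ : α ≃ Fin (Fintype.card α) | (compare · ⟨#S, hS⟩) ∘ σ = comparePattern i S}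
      = (#S)! * (Fintype.card α - 1 - #S)! := by
  obtain ⟨hlt, heq, hgt⟩ := card_comparePattern_fibers hiS
  obtain ⟨hlt', heq', hgt'⟩ := card_compare_fibers (⟨#S, hS⟩ : Fin (Fintype.card α))
  rw [card_filter_equiv_comp_eq, show (univ : Finset Ordering) = {.lt, .eq, .gt} from rfl]
  · simp [hlt, heq, hgt]
  · rintro (_ | _ | _) <;> simp_all

end ComparePattern

/-- The probability that the predecessors of a player, in a uniformly random ordering of
`a` players, form a given set of `t` players. -/
noncomputable def shapleyWeight (a t : ℕ) : ℝ := (t ! * (a - 1 - t)! : ℝ) / a !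

lemma shapleyWeight_succ_add_shapleyWeight_succ_succ {a t : ℕ} (h : t < a) :
    shapleyWeight (a + 1) t + shapleyWeight (a + 1) (t + 1) = shapleyWeight a t := by
  obtain ⟨k, rfl⟩ := Nat.exists_eq_add_of_lt h
  simp only [shapleyWeight, show t + k + 1 + 1 - 1 - t = k + 1 by omega,
    show t + k + 1 + 1 - 1 - (t + 1) = k by omega, show t + k + 1 - 1 - t = k by omega,
    Nat.factorial_succ]
  push_cast
  field_simp
  ring

noncomputable def shapleyOn {α : Type*} [DecidableEq α] (v : Finset α → ℝ) (A : Finset α)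
    (i : α) : ℝ :=
  ∑ T ∈ (A.erase i).powerset, shapleyWeight #A #T * (v (insert i T) - v T)

lemma shapleyOn_map {α β : Type*} [DecidableEq α] [DecidableEq β] (f : β ↪ α)
    (v : Finset α → ℝ) (A : Finset β) (i : β) :
    shapleyOn (fun S => v (S.map f)) A i = shapleyOn v (A.map f) (f i) := by
  rw [shapleyOn, shapleyOn, ← map_erase, map_eq_image f (A.erase i), powerset_image,
    sum_image fun S _ T _ h => image_injective f.injective h, card_map]
  refine sum_congr rfl fun T _ => ?_
  rw [card_image_of_injective _ f.injective, map_insert, map_eq_image]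

section Predecessors

variable {α : Type*} [Fintype α] [LinearOrder α]

lemma card_filter_predecessors_eq {i : α} {S : Finset α} (hiS : i ∉ S) :
    #{π : Equiv.Perm α | predecessors π i = S} = (#S)! * (Fintype.card α - 1 - #S)! := by
  have hS : #S < Fintype.card α := card_lt_univ_of_notMem hiS
  let e := (Fintype.orderIsoFinOfCardEq α rfl).symm
  rw [← card_filter_compare_comp_eq_comparePattern hiS hS]
  refine card_equiv ((Equiv.symmEquiv α α).trans (Equiv.equivCongr (.refl α) e.toEquiv))
    fun π => ?_
  have : predecessors π i = ({j | e (π.symm j) < e (π.symm i)} : Finset α) := by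
    simp [predecessors]
  rw [mem_filter_univ, mem_filter_univ, this]
  exact filter_apply_lt_apply_eq_iff (π.symm.trans e.toEquiv) hiS hS

lemma predecessors_mem_powerset_erase (π : Equiv.Perm α) (i : α) :
    predecessors π i ∈ (univ.erase i).powerset := by
  simp only [predecessors, mem_powerset, subset_iff, mem_filter_univ, mem_erase, mem_univ,
    and_true]
  rintro j hj rfl
  exact lt_irrefl _ hj

lemma sum_perm_predecessors (i : α) (f : Finset α → ℝ) :
    ∑ π : Equiv.Perm α, f (predecessors π i)
      = ∑ S ∈ (univ.erase i).powerset, ((#S)! * (Fintype.card α - 1 - #S)! : ℕ) * f S := by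
  rw [← sum_fiberwise_of_maps_to fun π _ => predecessors_mem_powerset_erase π i]
  refine sum_congr rfl fun S hS => ?_
  have hiS : i ∉ S := fun h => notMem_erase i univ (mem_powerset.1 hS h)
  rw [sum_congr rfl fun π hπ => congrArg f (mem_filter.1 hπ).2, sum_const,
    card_filter_predecessors_eq hiS, nsmul_eq_mul]

lemma shapley_eq_shapleyOn_univ (v : Finset α → ℝ) (i : α) :
    shapley v i = shapleyOn v univ i := by
  rw [shapley, sum_perm_predecessors i (fun S => v (insert i S) - v S), shapleyOn, mul_sum,
    Finset.card_univ]
  refine sum_congr rfl fun S _ => ?_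
  rw [shapleyWeight]
  push_cast
  ring

end Predecessors

lemma shapley_subgame_eq_shapleyOn {α : Type*} [LinearOrder α] (v : Finset α → ℝ)
    {A : Finset α} {i : α} (hi : i ∈ A) :
    shapley (fun S : Finset {x // x ∈ A} => v (S.map (Function.Embedding.subtype _))) ⟨i, hi⟩
      = shapleyOn v A i := by
  rw [shapley_eq_shapleyOn_univ, shapleyOn_map, univ_eq_attach, attach_map_val]
  rfl

section ConvexGame

variable {α : Type*} [DecidableEq α]

def IsConvexGame (v : Finset α → ℝ) : Prop :=
  ∀ A B : Finset α, v A + v B ≤ v (A ∪ B) + v (A ∩ B)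

variable {v : Finset α → ℝ}

lemma IsConvexGame.marginal_le_marginal (hv : IsConvexGame v) {S T : Finset α} {i : α}
    (hST : S ⊆ T) (hi : i ∉ T) :
    v (insert i S) - v S ≤ v (insert i T) - v T := by
  have h := hv (insert i S) T
  rw [insert_union, union_eq_right.2 hST, insert_inter_of_notMem hi,
    inter_eq_left.2 hST] at h
  linarith

lemma IsConvexGame.shapleyOn_le_insert (hv : IsConvexGame v) {A : Finset α} {i j : α}
    (hi : i ∈ A) (hj : j ∉ A) :
    shapleyOn v A i ≤ shapleyOn v (insert j A) i := by
  have hji : j ∉ A.erase i := fun h => hj (mem_of_mem_erase h)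
  rw [shapleyOn, shapleyOn, erase_insert_of_ne (ne_of_mem_of_not_mem hi hj).symm,
    sum_powerset_insert hji, card_insert_of_notMem hj, ← sum_add_distrib]
  refine sum_le_sum fun T hT => ?_
  have hTA : T ⊆ A.erase i := mem_powerset.1 hT
  have hiT : i ∉ insert j T :=
    mem_insert.not.2 (not_or.2 ⟨ne_of_mem_of_not_mem hi hj, fun h => notMem_erase i A (hTA h)⟩)
  have ht : #T < #A := (card_le_card hTA).trans_lt (card_erase_lt_of_mem hi)
  have hmono := mul_le_mul_of_nonneg_left (hv.marginal_le_marginal (subset_insert j T) hiT)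
    (by unfold shapleyWeight; positivity : 0 ≤ shapleyWeight (#A + 1) (#T + 1))
  rw [card_insert_of_notMem fun h => hji (hTA h),
    ← shapleyWeight_succ_add_shapleyWeight_succ_succ ht]
  linarith

lemma IsConvexGame.shapleyOn_mono (hv : IsConvexGame v) {A B : Finset α} {i : α} (hi : i ∈ A)
    (hAB : A ⊆ B) :
    shapleyOn v A i ≤ shapleyOn v B i := by
  obtain ⟨C, rfl⟩ : ∃ C, B = A ∪ C := ⟨B, (union_eq_right.2 hAB).symm⟩
  clear hAB
  induction C using Finset.induction_on with
  | empty => simp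
  | insert j C _ ih =>
    rw [union_insert]
    by_cases hj : j ∈ A ∪ C
    · rwa [insert_eq_of_mem hj]
    · exact ih.trans (hv.shapleyOn_le_insert (mem_union_left C hi) hj)

end ConvexGame

theorem shapley_encourages_grand_coalition_general {n : ℕ}
    (v : Finset (Fin n) → ℝ)
    (hconv : ∀ A B : Finset (Fin n), v A + v B ≤ v (A ∪ B) + v (A ∩ B))
    (A : Finset (Fin n)) (i : Fin n) (hi : i ∈ A) :
    shapley (fun S : Finset {x : Fin n // x ∈ A} =>
        v (S.map (Function.Embedding.subtype _))) ⟨i, hi⟩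
      ≤ shapley v i := by
  rw [shapley_subgame_eq_shapleyOn v hi, shapley_eq_shapleyOn_univ]
  exact IsConvexGame.shapleyOn_mono hconv hi (subset_univ A)

/-- For a convex TU game `v` on `Fin n`, any player `i` and any coalition `A` containing
`i`, the Shapley value of `i` in the sub-game `v_A` is at most the Shapley value of `i`
in `v`: the Shapley value encourages the grand coalition in convex games. -/
theorem shapley_encourages_grand_coalition {n : ℕ}
    (v : Finset (Fin n) → ℝ) (h0 : v ∅ = 0)
    (hconv : ∀ A B : Finset (Fin n), v A + v B ≤ v (A ∪ B) + v (A ∩ B))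
    (A : Finset (Fin n)) (i : Fin n) (hi : i ∈ A) :
    shapley (fun S : Finset {x : Fin n // x ∈ A} =>
        v (S.map (Function.Embedding.subtype _))) ⟨i, hi⟩
      ≤ shapley v i :=
  shapley_encourages_grand_coalition_general v hconv A i hi
end

section
/- For every convex 3-player game v on N = {1,2,3} and every player i in a 2-player coalition A ⊆ N, the τ-value of i in v is at least the τ-value of i in the sub-game v_A. Hence the τ-value encourages the grand coalition in all convex games of up to three players. -/
/-- The τ-value of player `i`: for an essential game (`T > V`) it is
`((M-T)/(M-V)) v{i} + ((T-V)/(M-V)) m_i`; for an inessential game it is `v {i}`. -/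
noncomputable def tauValue {α : Type*} [Fintype α] [DecidableEq α]
    (v : Finset α → ℝ) (i : α) : ℝ :=
  if (∑ j : α, v {j}) < v Finset.univ then
    (((∑ j : α, (v Finset.univ - v (Finset.univ.erase j))) - v Finset.univ) /
      ((∑ j : α, (v Finset.univ - v (Finset.univ.erase j))) - ∑ j : α, v {j})) * v {i} +
    ((v Finset.univ - ∑ j : α, v {j}) /
      ((∑ j : α, (v Finset.univ - v (Finset.univ.erase j))) - ∑ j : α, v {j})) *
      (v Finset.univ - v (Finset.univ.erase i))
  else v {i}

/-!
Write `x`, `y`, `z` for the excesses `v{i,j} - v{i} - v{j}`, `v{i,k} - v{i} - v{k}`,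
`v{j,k} - v{j} - v{k}` and `t` for `v(N) - v{i} - v{j} - v{k}`. In a convex game
`x, y ≥ 0`, `x + y ≤ t` and `x + z ≤ t`. The τ-value of `i` in the sub-game on `{i, j}` is
`v{i} + x / 2`, and in the essential game `v` it is `v{i} + t (t - z) / (3t - x - y - z)`; the
inequality between the two increments is the identity
`2t(t - z) - (3t - x - y - z) x = (2t - x)(t - x - z) + x y`.
-/

open Finset

lemma div_two_le_div_mul_sub {x y z t : ℝ} (hx : 0 ≤ x) (hy : 0 ≤ y) (hxy : x + y ≤ t)
    (hxz : x + z ≤ t) (ht : 0 < t) :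
    x / 2 ≤ t / (3 * t - x - y - z) * (t - z) := by
  have hpos : 0 < 3 * t - x - y - z := by linarith
  rw [div_mul_eq_mul_div, le_div_iff₀ hpos]
  nlinarith [mul_nonneg (by linarith : 0 ≤ 2 * t - x) (by linarith : 0 ≤ t - x - z),
    mul_nonneg hx hy]

section Game

variable {α : Type*} [DecidableEq α]

lemma add_le_pair_of_convex {v : Finset α → ℝ} (h0 : v ∅ = 0)
    (hconv : ∀ A B : Finset α, v A + v B ≤ v (A ∪ B) + v (A ∩ B)) {i j : α} (hij : i ≠ j) :
    v {i} + v {j} ≤ v {i, j} := by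
  have h := hconv {i} {j}
  rwa [← insert_eq, singleton_inter_of_notMem (by simpa using hij), h0, add_zero] at h

lemma add_le_triple_of_convex {v : Finset α → ℝ}
    (hconv : ∀ A B : Finset α, v A + v B ≤ v (A ∪ B) + v (A ∩ B)) {i j k : α} (hjk : j ≠ k) :
    v {i, j} + v {i, k} ≤ v {i, j, k} + v {i} := by
  have hunion : ({i, j} ∪ {i, k} : Finset α) = {i, j, k} := by
    ext; simp only [mem_union, mem_insert, mem_singleton]; tauto
  have hinter : ({i, j} ∩ {i, k} : Finset α) = {i} := by
    ext; simp only [mem_inter, mem_insert, mem_singleton]; grind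
  simpa [hunion, hinter] using hconv {i, j} {i, k}

variable [Fintype α]

/-- `V` of the τ-value formula. -/
def singletonSum (v : Finset α → ℝ) : ℝ := ∑ j, v {j}

/-- `m_i` of the τ-value formula. -/
def marginal (v : Finset α → ℝ) (i : α) : ℝ := v univ - v (univ.erase i)

/-- `M` of the τ-value formula. -/
def marginalSum (v : Finset α → ℝ) : ℝ := ∑ j, marginal v j

lemma tauValue_of_essential {v : Finset α → ℝ} (hess : singletonSum v < v univ)
    (hM : marginalSum v ≠ singletonSum v) (i : α) :
    tauValue v i = v {i} + (v univ - singletonSum v) / (marginalSum v - singletonSum v) *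
      (marginal v i - v {i}) := by
  have hD : marginalSum v - singletonSum v ≠ 0 := sub_ne_zero.2 hM
  rw [tauValue, if_pos (show ∑ j, v {j} < v univ from hess)]
  simp only [singletonSum, marginalSum, marginal] at hD ⊢
  field_simp
  ring

lemma tauValue_of_not_essential {v : Finset α → ℝ} (hin : ¬ singletonSum v < v univ) (i : α) :
    tauValue v i = v {i} :=
  if_neg hin

/-- In a superadditive two-player game the τ-value is the standard solution. -/
lemma tauValue_of_univ_eq_pair {v : Finset α → ℝ} {a b : α} (hab : a ≠ b)
    (huniv : (univ : Finset α) = {a, b}) (hsup : v {a} + v {b} ≤ v univ) :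
    tauValue v a = (v {a} + v univ - v {b}) / 2 := by
  have hV : singletonSum v = v {a} + v {b} := by rw [singletonSum, huniv, sum_pair hab]
  have hma : marginal v a = v univ - v {b} := by
    rw [marginal, huniv, erase_insert (by simpa using hab)]
  have hmb : marginal v b = v univ - v {a} := by
    rw [marginal, huniv, pair_comm, erase_insert (by simpa using hab.symm)]
  have hM : marginalSum v = 2 * v univ - v {a} - v {b} := by
    rw [marginalSum, huniv, sum_pair hab, ← huniv, hma, hmb]; ring
  rcases hsup.lt_or_eq with hess | hin
  · have hcoef : (v univ - (v {a} + v {b})) / (2 * v univ - v {a} - v {b} - (v {a} + v {b}))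
        = 1 / 2 := by
      rw [div_eq_div_iff (by linarith) two_ne_zero]; ring
    rw [tauValue_of_essential (by rwa [hV]) (by rw [hM, hV]; linarith), hM, hV, hma, hcoef]
    ring
  · rw [tauValue_of_not_essential (by rw [hV]; exact hin.not_lt), ← hin]
    ring

lemma half_le_tauValue_of_univ_eq_triple {v : Finset α → ℝ} (h0 : v ∅ = 0)
    (hconv : ∀ A B : Finset α, v A + v B ≤ v (A ∪ B) + v (A ∩ B)) {i j k : α}
    (hij : i ≠ j) (hik : i ≠ k) (hjk : j ≠ k) (huniv : (univ : Finset α) = {i, j, k}) :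
    (v {i} + v {i, j} - v {j}) / 2 ≤ tauValue v i := by
  have hV : singletonSum v = v {i} + v {j} + v {k} := by
    rw [singletonSum, huniv, sum_insert (by simp [hij, hik]), sum_pair hjk, add_assoc]
  have hm : ∀ {l : α} {S : Finset α}, ({i, j, k} : Finset α) \ {l} = S →
      marginal v l = v univ - v S := by
    intro l S hS; rw [marginal, erase_eq, ← hS, huniv]
  have hmi : marginal v i = v univ - v {j, k} := hm (by ext; simp; grind)
  have hmj : marginal v j = v univ - v {i, k} := hm (by ext; simp; grind)
  have hmk : marginal v k = v univ - v {i, j} := hm (by ext; simp; grind)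
  have hM : marginalSum v = 3 * v univ - v {j, k} - v {i, k} - v {i, j} := by
    rw [marginalSum, huniv, sum_insert (by simp [hij, hik]), sum_pair hjk, ← huniv, hmi, hmj, hmk]
    ring
  have hx := add_le_pair_of_convex h0 hconv hij
  have hy := add_le_pair_of_convex h0 hconv hik
  have hxy := add_le_triple_of_convex hconv (i := i) hjk
  have hxz := add_le_triple_of_convex hconv (i := j) hik
  rw [← huniv] at hxy
  rw [pair_comm j i, insert_comm, ← huniv] at hxz
  by_cases hess : singletonSum v < v univ
  · rw [tauValue_of_essential hess (by rw [hM, hV]; linarith), hM, hV, hmi]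
    have key := div_two_le_div_mul_sub (x := v {i, j} - v {i} - v {j})
      (y := v {i, k} - v {i} - v {k}) (z := v {j, k} - v {j} - v {k})
      (t := v univ - (v {i} + v {j} + v {k}))
      (by linarith) (by linarith) (by linarith) (by linarith) (by linarith)
    have hden : 3 * v univ - v {j, k} - v {i, k} - v {i, j} - (v {i} + v {j} + v {k}) =
        3 * (v univ - (v {i} + v {j} + v {k})) - (v {i, j} - v {i} - v {j}) -
          (v {i, k} - v {i} - v {k}) - (v {j, k} - v {j} - v {k}) := by ring
    rw [hden]
    linarith
  · rw [tauValue_of_not_essential hess]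
    linarith

end Game

def subgame {α : Type*} (v : Finset α → ℝ) (A : Finset α) : Finset {x // x ∈ A} → ℝ :=
  fun S => v (S.map (Function.Embedding.subtype _))

lemma tauValue_subgame_pair {α : Type*} [DecidableEq α] {v : Finset α → ℝ} {i j : α}
    (hij : i ≠ j) (hsup : v {i} + v {j} ≤ v {i, j}) (hi : i ∈ ({i, j} : Finset α)) :
    tauValue (subgame v {i, j}) ⟨i, hi⟩ = (v {i} + v {i, j} - v {j}) / 2 := by
  have hw_univ : subgame v {i, j} univ = v {i, j} := by
    rw [subgame, univ_eq_attach, attach_map_val]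
  have hw_single : ∀ l, subgame v {i, j} {l} = v {l.1} := fun l => by
    rw [subgame, map_singleton]; rfl
  have huniv : (univ : Finset {x // x ∈ ({i, j} : Finset α)}) = {⟨i, hi⟩, ⟨j, by simp⟩} := by
    ext ⟨x, hx⟩
    simp only [mem_univ, true_iff, mem_insert, mem_singleton, Subtype.mk.injEq]
    simpa using hx
  have hsub : subgame v {i, j} {⟨i, hi⟩} + subgame v {i, j} {⟨j, by simp⟩} ≤
      subgame v {i, j} univ := by
    rwa [hw_single, hw_single, hw_univ]
  rw [tauValue_of_univ_eq_pair (by simpa using hij) huniv hsub,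
    hw_univ, hw_single, hw_single]

/-- For a convex 3-player game `v` and a 2-player coalition `A` containing player `i`,
the τ-value of `i` in the sub-game `v_A` is at most the τ-value of `i` in `v`:
the τ-value encourages the grand coalition in convex games of up to three players. -/
theorem tau_encourages_three_player (v : Finset (Fin 3) → ℝ) (h0 : v ∅ = 0)
    (hconv : ∀ A B : Finset (Fin 3), v A + v B ≤ v (A ∪ B) + v (A ∩ B))
    (A : Finset (Fin 3)) (hA : A.card = 2) (i : Fin 3) (hi : i ∈ A) :
    tauValue (fun S : Finset {x : Fin 3 // x ∈ A} =>
        v (S.map (Function.Embedding.subtype _))) ⟨i, hi⟩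
      ≤ tauValue v i := by
  obtain ⟨j, hij, rfl⟩ : ∃ j, i ≠ j ∧ A = {i, j} := by
    obtain ⟨a, b, hab, rfl⟩ := card_eq_two.1 hA
    rcases mem_insert.1 hi with rfl | h
    · exact ⟨b, hab, rfl⟩
    · rw [mem_singleton.1 h]; exact ⟨a, hab.symm, pair_comm _ _⟩
  obtain ⟨k, hik, hjk, huniv⟩ : ∃ k, i ≠ k ∧ j ≠ k ∧ (univ : Finset (Fin 3)) = {i, j, k} := by
    revert i j; decide
  change tauValue (subgame v {i, j}) ⟨i, hi⟩ ≤ _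
  rw [tauValue_subgame_pair hij (add_le_pair_of_convex h0 hconv hij)]
  exact half_le_tauValue_of_univ_eq_triple h0 hconv hij hik hjk huniv
end

section
/- Let v be an essential convex 3-player game on N = {1,2,3}, and write v_i = v({i}), m_i = v(N)−v(N∖{i}), m_{12} = v({1,2}) − v({2}). Then v_1(m_1+m_3+v_2−v_1−v_3−m_2) + m_{12}(m_2+m_3+v_1−v_2−v_3−m_1) ≤ 2 m_1 (m_3 − v_3). -/
/-- For an essential convex 3-player game, with `v_i = v {i}`, `m_i = v N - v (N \ {i})`
and `m₁₂ = v {1,2} - v {2}`, one has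
`v₁(m₁+m₃+v₂-v₁-v₃-m₂) + m₁₂(m₂+m₃+v₁-v₂-v₃-m₁) ≤ 2 m₁ (m₃ - v₃)`.
(Players 1, 2, 3 are `0, 1, 2 : Fin 3`.) -/
theorem essential_convex_key_inequality (v : Finset (Fin 3) → ℝ) (h0 : v ∅ = 0)
    (hconv : ∀ A B : Finset (Fin 3), v A + v B ≤ v (A ∪ B) + v (A ∩ B))
    (hess : v {0} + v {1} + v {2} < v Finset.univ) :
    v {0} * ((v Finset.univ - v (Finset.univ.erase 0)) +
        (v Finset.univ - v (Finset.univ.erase 2)) + v {1}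
        - v {0} - v {2} - (v Finset.univ - v (Finset.univ.erase 1))) +
      (v {0, 1} - v {1}) * ((v Finset.univ - v (Finset.univ.erase 1)) +
        (v Finset.univ - v (Finset.univ.erase 2)) + v {0}
        - v {1} - v {2} - (v Finset.univ - v (Finset.univ.erase 0)))
      ≤ 2 * (v Finset.univ - v (Finset.univ.erase 0)) *
          ((v Finset.univ - v (Finset.univ.erase 2)) - v {2}) := by
  have e0 : (Finset.univ.erase (0 : Fin 3)) = {1, 2} := by decide
  have e1 : (Finset.univ.erase (1 : Fin 3)) = {0, 2} := by decide
  have e2 : (Finset.univ.erase (2 : Fin 3)) = {0, 1} := by decide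
  rw [e0, e1, e2]
  -- convexity instances
  have h1 := hconv {1, 2} {0, 2}
  have h2 := hconv {0} {2}
  have h3 := hconv {0, 1} {1, 2}
  have h4 := hconv {0} {1, 2}
  have h5 := hconv {0, 2} {0, 1}
  have h6 := hconv {1} {2}
  have u1 : ({1, 2} ∪ {0, 2} : Finset (Fin 3)) = Finset.univ := by decide
  have i1 : ({1, 2} ∩ {0, 2} : Finset (Fin 3)) = {2} := by decide
  have u2 : ({0} ∪ {2} : Finset (Fin 3)) = {0, 2} := by decide
  have i2 : ({0} ∩ {2} : Finset (Fin 3)) = ∅ := by decide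
  have u3 : ({0, 1} ∪ {1, 2} : Finset (Fin 3)) = Finset.univ := by decide
  have i3 : ({0, 1} ∩ {1, 2} : Finset (Fin 3)) = {1} := by decide
  have u4 : ({0} ∪ {1, 2} : Finset (Fin 3)) = Finset.univ := by decide
  have i4 : ({0} ∩ {1, 2} : Finset (Fin 3)) = ∅ := by decide
  have u5 : ({0, 2} ∪ {0, 1} : Finset (Fin 3)) = Finset.univ := by decide
  have i5 : ({0, 2} ∩ {0, 1} : Finset (Fin 3)) = {0} := by decide
  have u6 : ({1} ∪ {2} : Finset (Fin 3)) = {1, 2} := by decide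
  have i6 : ({1} ∩ {2} : Finset (Fin 3)) = ∅ := by decide
  rw [u1, i1] at h1
  rw [u2, i2, h0] at h2
  rw [u3, i3] at h3
  rw [u4, i4, h0] at h4
  rw [u5, i5] at h5
  rw [u6, i6, h0] at h6
  nlinarith [mul_nonneg (sub_nonneg.2 (by linarith : v {0} ≤ v Finset.univ - v {1, 2}))
      (by linarith : (0:ℝ) ≤ (v Finset.univ - v {1, 2}) + (v Finset.univ - v {0, 1}) + v {1}
        - v {0} - v {2} - (v Finset.univ - v {0, 2})),
    mul_nonneg (sub_nonneg.2 (by linarith : v {0, 1} - v {1} ≤ v Finset.univ - v {1, 2}))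
      (by linarith : (0:ℝ) ≤ (v Finset.univ - v {0, 2}) + (v Finset.univ - v {0, 1}) + v {0}
        - v {1} - v {2} - (v Finset.univ - v {1, 2}))]
end

section
/- Let f be an efficient solution function on convex games that encourages the grand coalition (i.e., for every convex game v and every coalition A ⊆ N, f^v_i ≥ f^{v_A}_i for all i ∈ A). Then for every convex game v, the allocation f^v lies in the core of v. -/
/-- If `f` is an efficient solution function on convex games that encourages the grand
coalition (for every convex game `v` and coalition `A`, each player `i ∈ A` gets at
least as much in `v` as in the sub-game `v_A`), then for every convex game `v` the
allocation `f^v` lies in the core of `v`. -/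
theorem encourage_implies_core
    (f : ∀ (α : Type) [Fintype α] [DecidableEq α], (Finset α → ℝ) → α → ℝ)
    (heff : ∀ (α : Type) [Fintype α] [DecidableEq α] (v : Finset α → ℝ),
      v ∅ = 0 → (∀ A B : Finset α, v A + v B ≤ v (A ∪ B) + v (A ∩ B)) →
      ∑ i : α, f α v i = v Finset.univ)
    (henc : ∀ (α : Type) [Fintype α] [DecidableEq α] (v : Finset α → ℝ),
      v ∅ = 0 → (∀ A B : Finset α, v A + v B ≤ v (A ∪ B) + v (A ∩ B)) →
      ∀ (A : Finset α) (i : α) (hi : i ∈ A),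
        f {x : α // x ∈ A} (fun S => v (S.map (Function.Embedding.subtype _))) ⟨i, hi⟩
          ≤ f α v i)
    (α : Type) [Fintype α] [DecidableEq α] (v : Finset α → ℝ)
    (h0 : v ∅ = 0)
    (hconv : ∀ A B : Finset α, v A + v B ≤ v (A ∪ B) + v (A ∩ B)) :
    (∑ i : α, f α v i = v Finset.univ) ∧
    ∀ A : Finset α, v A ≤ ∑ i ∈ A, f α v i := by
  refine ⟨heff α v h0 hconv, fun A => ?_⟩
  set w : Finset {x : α // x ∈ A} → ℝ :=
    fun S => v (S.map (Function.Embedding.subtype _)) with hw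
  have hw0 : w ∅ = 0 := by simp [hw, h0]
  have hwconv : ∀ S T : Finset {x : α // x ∈ A}, w S + w T ≤ w (S ∪ T) + w (S ∩ T) := by
    intro S T
    simp only [hw]
    rw [Finset.map_union, Finset.map_inter]
    exact hconv _ _
  have heffw := heff {x : α // x ∈ A} w hw0 hwconv
  have huniv : (Finset.univ.map (Function.Embedding.subtype (fun x => x ∈ A))) = A := by
    ext x
    simp
  have hvA : v A = ∑ i : {x : α // x ∈ A}, f _ w i := by
    rw [heffw, hw]
    simp only []
    rw [show (Finset.univ : Finset {x : α // x ∈ A}) = A.attach from rfl,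
      Finset.attach_map_val]
  rw [hvA]
  have := henc α v h0 hconv A
  calc ∑ i : {x : α // x ∈ A}, f _ w i
      ≤ ∑ i : {x : α // x ∈ A}, f α v i.1 := by
        apply Finset.sum_le_sum
        intro i _
        exact this i.1 i.2
    _ = ∑ i ∈ A, f α v i := by rw [← Finset.sum_coe_sort A (f α v)]
end

section
/- Let v be a super-additive 3-player game on N = {1,2,3}, and set M_{ij} = v({i,j}) − v({i}) − v({j}) for i ≠ j and S = v(N) − v({1}) − v({2}) − v({3}). Then v has a non-empty core if and only if S ≥ (M_{12} + M_{13} + M_{23}) / 2. -/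
/-- For a super-additive 3-player game `v`, with `M_ij = v{i,j} - v{i} - v{j}` and
`S = v N - v{1} - v{2} - v{3}`, the core of `v` is non-empty iff
`S ≥ (M₁₂ + M₁₃ + M₂₃)/2`. (Players 1,2,3 are `0,1,2 : Fin 3`.) -/
theorem three_player_core_nonempty_iff (v : Finset (Fin 3) → ℝ) (h0 : v ∅ = 0)
    (hsup : ∀ A B : Finset (Fin 3), Disjoint A B → v A + v B ≤ v (A ∪ B)) :
    (∃ x : Fin 3 → ℝ, (∑ i : Fin 3, x i = v Finset.univ) ∧
      ∀ A : Finset (Fin 3), v A ≤ ∑ i ∈ A, x i) ↔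
    ((v {0, 1} - v {0} - v {1}) + (v {0, 2} - v {0} - v {2}) +
        (v {1, 2} - v {1} - v {2})) / 2
      ≤ v Finset.univ - v {0} - v {1} - v {2} := by
  constructor
  · rintro ⟨x, hsum, hA⟩
    have h01 := hA {0, 1}
    have h02 := hA {0, 2}
    have h12 := hA {1, 2}
    rw [Finset.sum_pair (by decide : (0 : Fin 3) ≠ 1)] at h01
    rw [Finset.sum_pair (by decide : (0 : Fin 3) ≠ 2)] at h02
    rw [Finset.sum_pair (by decide : (1 : Fin 3) ≠ 2)] at h12
    rw [Fin.sum_univ_three] at hsum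
    linarith
  · intro hS
    set S := v Finset.univ - v {0} - v {1} - v {2} with hSdef
    set m01 := v {0, 1} - v {0} - v {1} with hm01def
    set m02 := v {0, 2} - v {0} - v {2} with hm02def
    set m12 := v {1, 2} - v {1} - v {2} with hm12def
    have hm01nn : 0 ≤ m01 := by
      have := hsup {0} {1} (by decide)
      have hu : ({0} ∪ {1} : Finset (Fin 3)) = {0, 1} := by decide
      rw [hu] at this; simp [hm01def]; linarith
    have hm02nn : 0 ≤ m02 := by
      have := hsup {0} {2} (by decide)
      have hu : ({0} ∪ {2} : Finset (Fin 3)) = {0, 2} := by decide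
      rw [hu] at this; simp [hm02def]; linarith
    have hm12nn : 0 ≤ m12 := by
      have := hsup {1} {2} (by decide)
      have hu : ({1} ∪ {2} : Finset (Fin 3)) = {1, 2} := by decide
      rw [hu] at this; simp [hm12def]; linarith
    have hm01S : m01 ≤ S := by
      have := hsup {0, 1} {2} (by decide)
      have hu : ({0, 1} ∪ {2} : Finset (Fin 3)) = Finset.univ := by decide
      rw [hu] at this; simp [hm01def, hSdef]; linarith
    have hm02S : m02 ≤ S := by
      have := hsup {0, 2} {1} (by decide)
      have hu : ({0, 2} ∪ {1} : Finset (Fin 3)) = Finset.univ := by decide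
      rw [hu] at this; simp [hm02def, hSdef]; linarith
    have hm12S : m12 ≤ S := by
      have := hsup {1, 2} {0} (by decide)
      have hu : ({1, 2} ∪ {0} : Finset (Fin 3)) = Finset.univ := by decide
      rw [hu] at this; simp [hm12def, hSdef]; linarith
    have hSum2 : m01 + m02 + m12 ≤ 2 * S := by linarith
    set t := max 0 (m01 + m12 - S) with htdef
    have ht0 : 0 ≤ t := le_max_left _ _
    have ht1 : m01 + m12 - S ≤ t := le_max_right _ _
    have ht2 : t ≤ m12 := max_le hm12nn (by linarith)
    have ht3 : t ≤ S - m02 := max_le (by linarith) (by linarith)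
    refine ⟨![v {0} + (S - m12), v {1} + t, v {2} + (m12 - t)], ?_, ?_⟩
    · rw [Fin.sum_univ_three]
      simp [hSdef]; ring
    · have henum : ∀ A : Finset (Fin 3), A = ∅ ∨ A = {0} ∨ A = {1} ∨ A = {2} ∨
          A = {0, 1} ∨ A = {0, 2} ∨ A = {1, 2} ∨ A = Finset.univ := by decide
      intro A
      have hu3 : ∑ i ∈ (Finset.univ : Finset (Fin 3)),
          (![v {0} + (S - m12), v {1} + t, v {2} + (m12 - t)]) i
          = v Finset.univ := by rw [Fin.sum_univ_three]; simp [hSdef]; ring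
      rcases henum A with h | h | h | h | h | h | h | h <;> subst h <;>
        simp only [Finset.sum_pair (by decide : (0 : Fin 3) ≠ 1),
          Finset.sum_pair (by decide : (0 : Fin 3) ≠ 2),
          Finset.sum_pair (by decide : (1 : Fin 3) ≠ 2),
          Finset.sum_singleton, Finset.sum_empty, hu3, h0,
          Matrix.cons_val_zero, Matrix.cons_val_one, Matrix.head_cons,
          Matrix.cons_val_two, Matrix.tail_cons] <;>
        linarith
end
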